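/- Let A, A₀, B, B₀ partition a vertex set V and let J be a matching exceptional system with fictive edge matching J* = J*_A + J*_B. If C_A is a Hamilton cycle on A consistent with J*_A and C_B is a Hamilton cycle on B consistent with J*_B, then C_A + C_B − J* + J is the union of a Hamilton cycle on A' = A₀ ∪ A and a Hamilton cycle on B' = B₀ ∪ B. In particular, if |A'| and |B'| are both even, it is the union of two edge-disjoint perfect matchings on V. -/

import Mathlib

open SimpleGraph

/-- The degree of a vertex, as the cardinality of its neighbourhood. -/
noncomputable def degS {V : Type*} (J : SimpleGraph V) (v : V) : ℕ := (J.neighborSet v).ncard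

/-- A path system: a graph which is a union of vertex-disjoint paths. -/
def PathSystem {V : Type*} (J : SimpleGraph V) : Prop := J.IsAcyclic ∧ ∀ v, degS J v ≤ 2

/-- The matching `J*_{AB}` induced by the nontrivial paths of a path system `J`. -/
def starAB {V : Type*} (J : SimpleGraph V) : SimpleGraph V where
  Adj x y := x ≠ y ∧ degS J x = 1 ∧ degS J y = 1 ∧ J.Reachable x y
  symm := ⟨fun _ _ h => ⟨h.1.symm, h.2.2.1, h.2.1, h.2.2.2.symm⟩⟩
  loopless := ⟨fun _ h => h.1 rfl⟩

/-- The cycle graph traced out by `f : ZMod N → V`. -/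
def cycOn {V : Type*} {N : ℕ} (f : ZMod N → V) : SimpleGraph V :=
  SimpleGraph.fromEdgeSet {e | ∃ i : ZMod N, e = s(f i, f (i + 1))}

/-- `H` is a Hamilton cycle on the vertex set `A`. -/
def IsHamCycleOn {V : Type*} (H : SimpleGraph V) (A : Set V) : Prop :=
  ∃ (N : ℕ) (f : ZMod N → V), 3 ≤ N ∧ Function.Injective f ∧ Set.range f = A ∧ H = cycOn f

/-!
In a path system every nontrivial component is a tree of maximum degree two, so by the handshake
count it has exactly two leaves. Hence a vertex of `A` incident to `J` has exactly one fictive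
edge, and consistency puts it on `C_A`; trading the fictive edges of `C_A` for the paths of `J`
leaves a graph on `A'` that is `2`-regular. It is connected, since each fictive edge is traded for
a path between its ends and every vertex of `A₀` lies on such a path, so it is a Hamilton cycle.
An even Hamilton cycle is the union of its edges of even and of odd index.
-/

namespace SimpleGraph

variable {V : Type*}

/-- Unlike `G.induce S`, a graph on all of `V`. -/
def inducedOn (G : SimpleGraph V) (S : Set V) : SimpleGraph V where
  Adj x y := G.Adj x y ∧ x ∈ S ∧ y ∈ S
  symm := ⟨fun _ _ h => ⟨h.1.symm, h.2.2, h.2.1⟩⟩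
  loopless := ⟨fun x h => G.loopless.irrefl x h.1⟩

lemma fromEdgeSet_restrict_eq_inducedOn (G : SimpleGraph V) (S : Set V) :
    fromEdgeSet {e | ∃ u v, e = s(u, v) ∧ G.Adj u v ∧ u ∈ S ∧ v ∈ S} = G.inducedOn S := by
  ext x y
  simp only [fromEdgeSet_adj, Set.mem_ofPred_eq, Sym2.eq_iff]
  constructor
  · rintro ⟨⟨u, v, ⟨rfl, rfl⟩ | ⟨rfl, rfl⟩, huv, hu, hv⟩, -⟩
    exacts [⟨huv, hu, hv⟩, ⟨huv.symm, hv, hu⟩]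
  · rintro ⟨hxy, hx, hy⟩
    exact ⟨⟨x, y, Or.inl ⟨rfl, rfl⟩, hxy, hx, hy⟩, hxy.ne⟩

lemma Reachable.inducedOn {G : SimpleGraph V} {S : Set V}
    (hS : ∀ x y, G.Adj x y → x ∈ S → y ∈ S) {x y : V} (h : G.Reachable x y) (hx : x ∈ S) :
    y ∈ S ∧ (G.inducedOn S).Reachable x y := by
  obtain ⟨p⟩ := h
  induction p with
  | nil => exact ⟨hx, .rfl⟩
  | cons hadj _ ih =>
    have hy := hS _ _ hadj hx
    obtain ⟨hz, hr⟩ := ih hy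
    exact ⟨hz, (show (G.inducedOn S).Adj _ _ from ⟨hadj, hx, hy⟩).reachable.trans hr⟩

end SimpleGraph

open SimpleGraph

section CycleGraph

variable {V : Type*} {N : ℕ} {f : ZMod N → V}

lemma ZMod.one_ne_zero_of_three_le (hN : 3 ≤ N) : (1 : ZMod N) ≠ 0 := by
  have : Fact (1 < N) := ⟨by omega⟩
  exact one_ne_zero

lemma ZMod.two_ne_zero_of_three_le (hN : 3 ≤ N) : (2 : ZMod N) ≠ 0 := by
  intro h
  rw [show (2 : ZMod N) = ((2 : ℕ) : ZMod N) by norm_cast, ZMod.natCast_eq_zero_iff] at h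
  have := Nat.le_of_dvd two_pos h
  omega

lemma cycOn_adj_iff (hN : 3 ≤ N) (hf : f.Injective) {x y : V} :
    (cycOn f).Adj x y ↔ ∃ i, s(x, y) = s(f i, f (i + 1)) := by
  refine ⟨fun h => h.1, fun ⟨i, hi⟩ => ⟨⟨i, hi⟩, ?_⟩⟩
  rintro rfl
  have := Sym2.mk_isDiag_iff.mpr (rfl : x = x)
  rw [hi, Sym2.mk_isDiag_iff] at this
  exact ZMod.one_ne_zero_of_three_le hN (by simpa using (hf this).symm)

lemma cycOn_adj_mem_range {x y : V} (h : (cycOn f).Adj x y) : x ∈ Set.range f := by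
  obtain ⟨⟨i, hi⟩, -⟩ := h
  rcases Sym2.eq_iff.mp hi with ⟨rfl, -⟩ | ⟨rfl, -⟩
  exacts [⟨i, rfl⟩, ⟨i + 1, rfl⟩]

lemma cycOn_edge_eq_iff (hN : 3 ≤ N) (hf : f.Injective) {i j : ZMod N} :
    s(f i, f (i + 1)) = s(f j, f (j + 1)) ↔ i = j := by
  refine ⟨fun h => ?_, fun h => h ▸ rfl⟩
  rcases Sym2.eq_iff.mp h with ⟨h1, -⟩ | ⟨h1, h2⟩
  · exact hf h1
  · exact absurd (by linear_combination hf h2 - hf h1) (ZMod.two_ne_zero_of_three_le hN)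

lemma cycOn_neighborSet (hN : 3 ≤ N) (hf : f.Injective) (i : ZMod N) :
    (cycOn f).neighborSet (f i) = {f (i + 1), f (i - 1)} := by
  ext z
  simp only [mem_neighborSet, cycOn_adj_iff hN hf, Set.mem_insert_iff, Set.mem_singleton_iff]
  constructor
  · rintro ⟨j, hj⟩
    rcases Sym2.eq_iff.mp hj with ⟨h1, rfl⟩ | ⟨h1, rfl⟩
    · exact Or.inl (by rw [hf h1])
    · exact Or.inr (by rw [hf h1, add_sub_cancel_right])
  · rintro (rfl | rfl)
    · exact ⟨i, rfl⟩
    · exact ⟨i - 1, by rw [sub_add_cancel, Sym2.eq_swap]⟩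

lemma degS_cycOn (hN : 3 ≤ N) (hf : f.Injective) (i : ZMod N) : degS (cycOn f) (f i) = 2 := by
  rw [degS, cycOn_neighborSet hN hf, Set.ncard_pair]
  intro h
  exact ZMod.two_ne_zero_of_three_le hN (by linear_combination hf h)

end CycleGraph

section HamiltonCycle

variable {V : Type*} {G : SimpleGraph V}

lemma SimpleGraph.Walk.getVert_val_add_one {u : V} (p : G.Walk u u) (hp : 1 < p.length)
    (i : ZMod p.length) : p.getVert (i + 1).val = p.getVert (i.val + 1) := by
  have : NeZero p.length := ⟨by omega⟩
  rw [ZMod.val_add, ZMod.val_one'' (by omega)]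
  rcases (Nat.lt_or_ge (i.val + 1) p.length) with h | h
  · rw [Nat.mod_eq_of_lt h]
  · rw [show i.val + 1 = p.length by have := ZMod.val_lt i; omega, Nat.mod_self,
      Walk.getVert_zero, Walk.getVert_length]

/-- The witness is `i ↦ p.getVert i.val` on `ZMod p.length`. -/
lemma SimpleGraph.Walk.IsCycle.isHamCycleOn {u : V} {p : G.Walk u u} (hp : p.IsCycle) :
    IsHamCycleOn p.toSubgraph.spanningCoe p.toSubgraph.verts := by
  have hN := hp.three_le_length
  have : NeZero p.length := ⟨by omega⟩
  have hf : Function.Injective fun i : ZMod p.length => p.getVert i.val := fun i j h =>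
    ZMod.val_injective _ (hp.getVert_injOn' (by have := ZMod.val_lt i; simp; omega)
      (by have := ZMod.val_lt j; simp; omega) h)
  refine ⟨p.length, fun i => p.getVert i.val, hN, hf, ?_, ?_⟩
  · ext x
    rw [Walk.mem_verts_toSubgraph, Walk.mem_support_iff_exists_getVert]
    constructor
    · rintro ⟨i, rfl⟩
      exact ⟨i.val, rfl, (ZMod.val_lt i).le⟩
    · rintro ⟨n, rfl, hn⟩
      rcases hn.lt_or_eq with hn | rfl
      · exact ⟨n, by simp [ZMod.val_natCast, Nat.mod_eq_of_lt hn]⟩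
      · exact ⟨0, by simp⟩
  · ext x y
    rw [Subgraph.spanningCoe_adj, Walk.toSubgraph_adj_iff, cycOn_adj_iff hN hf]
    simp only [p.getVert_val_add_one (by omega)]
    constructor
    · rintro ⟨n, hn, hlt⟩
      exact ⟨n, by simp [ZMod.val_natCast, Nat.mod_eq_of_lt hlt, hn]⟩
    · rintro ⟨i, hi⟩
      exact ⟨i.val, hi.symm, ZMod.val_lt i⟩

lemma isHamCycleOn_of_degS_eq_two [Finite V] {S : Set V} (hS : S.Nonempty)
    (hsupp : ∀ x y, G.Adj x y → x ∈ S) (hdeg : ∀ v ∈ S, degS G v = 2)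
    (hconn : ∀ u ∈ S, ∀ v ∈ S, G.Reachable u v) : IsHamCycleOn G S := by
  have hcyc : G.IsCycles := fun v ⟨w, hw⟩ => hdeg v (hsupp v w hw)
  obtain ⟨v, hv⟩ := hS
  have hsupp_eq : (G.connectedComponentMk v).supp = S := by
    ext x
    rw [ConnectedComponent.mem_supp_iff, ConnectedComponent.eq]
    refine ⟨fun ⟨q⟩ => ?_, fun hx => hconn x hx v hv⟩
    cases q with
    | nil => exact hv
    | cons h _ => exact hsupp _ _ h
  have hnbr : (G.neighborSet v).Nonempty :=
    Set.nonempty_of_ncard_ne_zero (by rw [← degS, hdeg v hv]; omega)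
  obtain ⟨p, hp, hverts⟩ :=
    hcyc.exists_cycle_toSubgraph_verts_eq_connectedComponentSupp rfl hnbr
  rw [hsupp_eq] at hverts
  have hG : G = p.toSubgraph.spanningCoe := by
    have := Fintype.ofFinite V
    classical
    ext x y
    refine ⟨fun h => ?_, fun h => h.adj_sub⟩
    exact (hp.adj_toSubgraph_iff_of_isCycles hcyc (hverts ▸ hsupp x y h) y).mpr h
  rw [hG, ← hverts]
  exact hp.isHamCycleOn

end HamiltonCycle

section PathSystem

lemma degS_eq_degree {W : Type*} (T : SimpleGraph W) [Fintype W] [DecidableRel T.Adj] (w : W) :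
    degS T w = T.degree w := by
  rw [degS, ← card_neighborFinset_eq_degree, Set.ncard_eq_toFinset_card', Set.toFinset_card,
    card_neighborFinset_eq_degree, card_neighborSet_eq_degree]

/-- The degrees sum to `2 (|W| - 1)` and each is `1` or `2`. -/
lemma SimpleGraph.IsTree.ncard_degS_eq_one {W : Type*} [Finite W] [Nontrivial W]
    {T : SimpleGraph W} (hT : T.IsTree) (hdeg : ∀ w, degS T w ≤ 2) :
    {w | degS T w = 1}.ncard = 2 := by
  have := Fintype.ofFinite W
  classical
  simp only [degS_eq_degree] at hdeg ⊢
  have hpos : ∀ w, 0 < T.degree w := fun w => hT.connected.preconnected.degree_pos_of_nontrivial w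
  have hsum : ∑ w, T.degree w + {w | T.degree w = 1}.ncard = ∑ _w : W, 2 := by
    rw [Set.ncard_eq_toFinset_card', Set.toFinset_ofPred, Finset.card_filter,
      ← Finset.sum_add_distrib]
    refine Finset.sum_congr rfl fun w _ => ?_
    have := hpos w
    have := hdeg w
    split_ifs <;> omega
  have hedges := hT.card_edgeFinset
  rw [sum_degrees_eq_twice_card_edges, Finset.sum_const, Finset.card_univ, smul_eq_mul] at hsum
  omega

variable {V : Type*} [Finite V] {J : SimpleGraph V}

lemma PathSystem.ncard_reachable_degS_eq_one (hJ : PathSystem J) {v u : V} (h : J.Adj v u) :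
    {w | J.Reachable v w ∧ degS J w = 1}.ncard = 2 := by
  set c := J.connectedComponentMk v
  have hc : ∀ {w}, w ∈ c ↔ J.Reachable v w := fun {w} => by
    change w ∈ c.supp ↔ _
    rw [ConnectedComponent.mem_supp_iff, ConnectedComponent.eq]
    exact ⟨fun h => h.symm, fun h => h.symm⟩
  have hdeg : ∀ w : c, degS c.toSimpleGraph w = degS J w := fun ⟨w, hw⟩ => by
    have : c.toSimpleGraph.neighborSet ⟨w, hw⟩ = Subtype.val ⁻¹' J.neighborSet w := rfl
    rw [degS, degS, this, Set.ncard_preimage_of_injective_subset_range Subtype.val_injective]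
    exact fun x hx => ⟨⟨x, c.mem_supp_of_adj_mem_supp hw hx⟩, rfl⟩
  have : Nontrivial c :=
    ⟨⟨v, hc.mpr .rfl⟩, ⟨u, hc.mpr h.reachable⟩, fun h' => h.ne (congrArg Subtype.val h')⟩
  have htree := (hJ.1.isTree_connectedComponent c).ncard_degS_eq_one
    fun w => (hdeg w).trans_le (hJ.2 w)
  rw [← htree, ← Set.ncard_image_of_injective _ Subtype.val_injective]
  congr 1
  ext w
  simp only [Set.mem_image, Set.mem_ofPred_eq, hdeg]
  exact ⟨fun ⟨hr, hw⟩ => ⟨⟨w, hc.mpr hr⟩, hw, rfl⟩, fun ⟨⟨x, hx⟩, hw, hx'⟩ => hx' ▸ ⟨hc.mp hx, hw⟩⟩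

lemma PathSystem.exists_reachable_degS_eq_one (hJ : PathSystem J) {v u : V} (h : J.Adj v u) :
    ∃ w, J.Reachable v w ∧ degS J w = 1 :=
  Set.nonempty_of_ncard_ne_zero (s := {w | J.Reachable v w ∧ degS J w = 1})
    (by rw [hJ.ncard_reachable_degS_eq_one h]; omega)

lemma PathSystem.ncard_starAB_neighborSet (hJ : PathSystem J) {v : V} (hv : degS J v ≤ 1) :
    ((starAB J).neighborSet v).ncard = degS J v := by
  rcases Nat.le_one_iff_eq_zero_or_eq_one.mp hv with h0 | h1
  · rw [h0, Set.ncard_eq_zero (Set.toFinite _), Set.eq_empty_iff_forall_notMem]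
    exact fun w hw => by have := hw.2.1; omega
  · obtain ⟨u, hu⟩ := Set.nonempty_of_ncard_ne_zero (s := J.neighborSet v) (by rw [← degS]; omega)
    set L := {w | J.Reachable v w ∧ degS J w = 1}
    have hset : (starAB J).neighborSet v = L \ {v} := by
      ext w
      simp only [L, mem_neighborSet, starAB, Set.mem_sdiff, Set.mem_ofPred_eq,
        Set.mem_singleton_iff]
      exact ⟨fun ⟨hne, _, hw, hr⟩ => ⟨⟨hr, hw⟩, hne.symm⟩,
        fun ⟨⟨hr, hw⟩, hne⟩ => ⟨Ne.symm hne, h1, hw, hr⟩⟩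
    rw [hset, Set.ncard_sdiff_singleton_of_mem (show v ∈ L from ⟨.rfl, h1⟩),
      hJ.ncard_reachable_degS_eq_one hu, h1]

end PathSystem

section ReplaceFictive

variable {V : Type*}

/-- `C - J*_X + J[X₀ ∪ X]` in the paper's notation. -/
def replaceFictive (J : SimpleGraph V) (X₀ X : Set V) (C : SimpleGraph V) : SimpleGraph V :=
  (C \ (starAB J).inducedOn X) ⊔ J.inducedOn (X₀ ∪ X)

variable {J : SimpleGraph V} {X₀ X : Set V} {N : ℕ} {f : ZMod N → V}

lemma mem_of_reachable_of_degS_eq_one (hX₀ : ∀ v ∈ X₀, degS J v = 2)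
    (hJS : ∀ x y, J.Adj x y → x ∈ X₀ ∪ X → y ∈ X₀ ∪ X) {x w : V} (hr : J.Reachable x w)
    (hx : x ∈ X₀ ∪ X) (hw : degS J w = 1) : w ∈ X := by
  rcases (hr.inducedOn hJS hx).1 with hw0 | hwX
  · have := hX₀ w hw0
    omega
  · exact hwX

lemma degS_replaceFictive_of_mem [Finite V] (hJ : PathSystem J) (hX₀ : ∀ v ∈ X₀, degS J v = 2)
    (hX : ∀ v ∈ X, degS J v ≤ 1) (hJX : ∀ x y, J.Adj x y → x ∈ X → y ∉ X)
    (hJS : ∀ x y, J.Adj x y → x ∈ X₀ ∪ X → y ∈ X₀ ∪ X)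
    (hN : 3 ≤ N) (hf : f.Injective) (hfX : Set.range f = X)
    (hcons : (starAB J).inducedOn X ≤ cycOn f) {v : V} (hv : v ∈ X) :
    degS (replaceFictive J X₀ X (cycOn f)) v = 2 := by
  set JX := (starAB J).inducedOn X
  have hvS : v ∈ X₀ ∪ X := Or.inr hv
  have hnbr : (replaceFictive J X₀ X (cycOn f)).neighborSet v =
      ((cycOn f).neighborSet v \ JX.neighborSet v) ∪ J.neighborSet v := by
    ext y
    simp only [replaceFictive, mem_neighborSet, sup_adj, sdiff_adj, inducedOn, Set.mem_union,
      Set.mem_sdiff]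
    exact ⟨Or.imp_right (·.1), Or.imp_right fun h => ⟨h, hvS, hJS v y h hvS⟩⟩
  have hdisj : Disjoint ((cycOn f).neighborSet v \ JX.neighborSet v) (J.neighborSet v) :=
    Set.disjoint_left.mpr fun y hy hJy =>
      hJX v y hJy hv (hfX ▸ cycOn_adj_mem_range hy.1.symm)
  have hJXnbr : JX.neighborSet v = (starAB J).neighborSet v := by
    ext w
    refine ⟨fun h => h.1, fun h => ⟨h, hv, ?_⟩⟩
    exact mem_of_reachable_of_degS_eq_one hX₀ hJS h.2.2.2 hvS h.2.2.1
  obtain ⟨i, rfl⟩ := hfX ▸ hv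
  rw [degS, hnbr, Set.ncard_union_eq hdisj, Set.ncard_sdiff (neighborSet_mono hcons _), ← degS,
    degS_cycOn hN hf, hJXnbr, hJ.ncard_starAB_neighborSet (hX _ hv), ← degS]
  have := hX _ hv
  omega

lemma degS_replaceFictive_of_mem_left (hdisj : Disjoint X₀ X) (hX₀ : ∀ v ∈ X₀, degS J v = 2)
    (hJS : ∀ x y, J.Adj x y → x ∈ X₀ ∪ X → y ∈ X₀ ∪ X) (hfX : Set.range f = X) {v : V}
    (hv : v ∈ X₀) : degS (replaceFictive J X₀ X (cycOn f)) v = 2 := by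
  rw [← hX₀ v hv, degS, degS]
  congr 1
  ext y
  simp only [replaceFictive, mem_neighborSet, sup_adj, sdiff_adj, inducedOn]
  refine ⟨?_, fun h => Or.inr ⟨h, Or.inl hv, hJS v y h (Or.inl hv)⟩⟩
  rintro (⟨h, -⟩ | ⟨h, -⟩)
  · exact absurd (hfX ▸ cycOn_adj_mem_range h) (Set.disjoint_left.mp hdisj hv)
  · exact h

lemma reachable_replaceFictive [Finite V] (hJ : PathSystem J) (hX₀ : ∀ v ∈ X₀, degS J v = 2)
    (hJS : ∀ x y, J.Adj x y → x ∈ X₀ ∪ X → y ∈ X₀ ∪ X)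
    (hN : 3 ≤ N) (hf : f.Injective) (hfX : Set.range f = X) :
    ∀ u ∈ X₀ ∪ X, ∀ v ∈ X₀ ∪ X, (replaceFictive J X₀ X (cycOn f)).Reachable u v := by
  set K := replaceFictive J X₀ X (cycOn f)
  have hJK : ∀ {x y}, J.Reachable x y → x ∈ X₀ ∪ X → K.Reachable x y := fun hr hx =>
    (hr.inducedOn hJS hx).2.mono le_sup_right
  have hstep : ∀ i, K.Reachable (f i) (f (i + 1)) := fun i => by
    by_cases hfic : ((starAB J).inducedOn X).Adj (f i) (f (i + 1))
    · exact hJK hfic.1.2.2.2 (Or.inr hfic.2.1)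
    · exact Adj.reachable (Or.inl ⟨(cycOn_adj_iff hN hf).mpr ⟨i, rfl⟩, hfic⟩)
  have hcyc : ∀ i (n : ℕ), K.Reachable (f i) (f (i + n)) := fun i n => by
    induction n with
    | zero => simp
    | succ n ih => exact ih.trans (by simpa [add_assoc] using hstep (i + n))
  have : NeZero N := ⟨by omega⟩
  have hbase : ∀ u ∈ X₀ ∪ X, K.Reachable u (f 0) := by
    rintro u (hu | hu)
    · obtain ⟨y, hy⟩ := Set.nonempty_of_ncard_ne_zero (s := J.neighborSet u)
        (by rw [← degS, hX₀ u hu]; omega)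
      obtain ⟨w, hr, hw⟩ := hJ.exists_reachable_degS_eq_one hy
      obtain ⟨i, rfl⟩ := hfX ▸ mem_of_reachable_of_degS_eq_one hX₀ hJS hr (Or.inl hu) hw
      exact (hJK hr (Or.inl hu)).trans (by simpa using hcyc i (-i).val)
    · obtain ⟨i, rfl⟩ := hfX ▸ hu
      simpa using hcyc i (-i).val
  exact fun u hu v hv => (hbase u hu).trans (hbase v hv).symm

lemma isHamCycleOn_replaceFictive [Finite V] (hJ : PathSystem J) (hdisj : Disjoint X₀ X)
    (hX₀ : ∀ v ∈ X₀, degS J v = 2) (hX : ∀ v ∈ X, degS J v ≤ 1)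
    (hJX : ∀ x y, J.Adj x y → x ∈ X → y ∉ X) (hJS : ∀ x y, J.Adj x y → x ∈ X₀ ∪ X → y ∈ X₀ ∪ X)
    (hN : 3 ≤ N) (hf : f.Injective) (hfX : Set.range f = X)
    (hcons : (starAB J).inducedOn X ≤ cycOn f) :
    IsHamCycleOn (replaceFictive J X₀ X (cycOn f)) (X₀ ∪ X) := by
  refine isHamCycleOn_of_degS_eq_two ⟨f 0, Or.inr (hfX ▸ ⟨0, rfl⟩)⟩ ?_ ?_
    (reachable_replaceFictive hJ hX₀ hJS hN hf hfX)
  · rintro x y (⟨h, -⟩ | ⟨-, hx, -⟩)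
    exacts [Or.inr (hfX ▸ cycOn_adj_mem_range h), hx]
  · rintro v (hv | hv)
    · exact degS_replaceFictive_of_mem_left hdisj hX₀ hJS hfX hv
    · exact degS_replaceFictive_of_mem hJ hX₀ hX hJX hJS hN hf hfX hcons hv

end ReplaceFictive

section PerfectMatchings

variable {V : Type*} {N : ℕ} {f : ZMod N → V}

/-- The edges `f i f (i + 1)` of the cycle with `i ≡ c (mod 2)`, for even `N`. -/
def cycOnParity (hN : 2 ∣ N) (f : ZMod N → V) (c : ZMod 2) : SimpleGraph V :=
  fromEdgeSet {e | ∃ i, ZMod.castHom hN (ZMod 2) i = c ∧ e = s(f i, f (i + 1))}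

lemma cycOnParity_adj_iff (h2 : 2 ∣ N) (hN : 3 ≤ N) (hf : f.Injective) {c : ZMod 2} {x y : V} :
    (cycOnParity h2 f c).Adj x y ↔
      ∃ i, ZMod.castHom h2 (ZMod 2) i = c ∧ s(x, y) = s(f i, f (i + 1)) := by
  refine ⟨fun h => h.1, fun ⟨i, hi, he⟩ => ⟨⟨i, hi, he⟩, ?_⟩⟩
  exact ((cycOn_adj_iff hN hf).mpr ⟨i, he⟩).ne

lemma cycOn_eq_cycOnParity_sup (h2 : 2 ∣ N) (hN : 3 ≤ N) (hf : f.Injective) :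
    cycOn f = cycOnParity h2 f 0 ⊔ cycOnParity h2 f 1 := by
  ext x y
  simp only [sup_adj, cycOn_adj_iff hN hf, cycOnParity_adj_iff h2 hN hf]
  constructor
  · rintro ⟨i, he⟩
    rcases (by decide : ∀ c : ZMod 2, c = 0 ∨ c = 1) (ZMod.castHom h2 (ZMod 2) i) with hc | hc
    exacts [Or.inl ⟨i, hc, he⟩, Or.inr ⟨i, hc, he⟩]
  · rintro (⟨i, -, he⟩ | ⟨i, -, he⟩) <;> exact ⟨i, he⟩

lemma disjoint_edgeSet_cycOnParity (h2 : 2 ∣ N) (hN : 3 ≤ N) (hf : f.Injective) :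
    Disjoint (cycOnParity h2 f 0).edgeSet (cycOnParity h2 f 1).edgeSet := by
  refine Set.disjoint_left.mpr fun e he he' => ?_
  simp only [cycOnParity, edgeSet_fromEdgeSet] at he he'
  obtain ⟨⟨i, hi, rfl⟩, -⟩ := he
  obtain ⟨⟨j, hj, he⟩, -⟩ := he'
  rw [cycOn_edge_eq_iff hN hf] at he
  subst he
  exact zero_ne_one (hi.symm.trans hj)

lemma degS_cycOnParity (h2 : 2 ∣ N) (hN : 3 ≤ N) (hf : f.Injective) (c : ZMod 2) (j : ZMod N) :
    degS (cycOnParity h2 f c) (f j) = 1 := by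
  set π := ZMod.castHom h2 (ZMod 2)
  have hparity : π (j - 1) = c ↔ π j ≠ c := by
    rw [map_sub, map_one]
    generalize π j = a
    revert a c
    decide
  rw [degS, Set.ncard_eq_one]
  refine ⟨if π j = c then f (j + 1) else f (j - 1), Set.ext fun y => ?_⟩
  rw [mem_neighborSet, cycOnParity_adj_iff h2 hN hf, Set.mem_singleton_iff]
  constructor
  · rintro ⟨i, hi, he⟩
    rcases Sym2.eq_iff.mp he with ⟨h1, rfl⟩ | ⟨h1, rfl⟩
    · obtain rfl := hf h1
      exact (if_pos hi).symm
    · obtain rfl : i = j - 1 := by rw [hf h1, add_sub_cancel_right]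
      exact (if_neg (hparity.mp hi)).symm
  · split_ifs with hc
    · rintro rfl
      exact ⟨j, hc, rfl⟩
    · rintro rfl
      exact ⟨j - 1, hparity.mpr hc, by rw [sub_add_cancel, Sym2.eq_swap]⟩

end PerfectMatchings

section Assembly

variable {V : Type*} {H H₁ H₂ : SimpleGraph V} {S T : Set V}

lemma IsHamCycleOn.mem_of_adj (h : IsHamCycleOn H S) {x y : V} (hxy : H.Adj x y) : x ∈ S := by
  obtain ⟨N, f, -, -, rfl, rfl⟩ := h
  exact cycOn_adj_mem_range hxy

lemma IsHamCycleOn.disjoint_edgeSet (h₁ : IsHamCycleOn H₁ S) (h₂ : IsHamCycleOn H₂ T)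
    (hST : Disjoint S T) : Disjoint H₁.edgeSet H₂.edgeSet := by
  refine Set.disjoint_left.mpr fun e he he' => ?_
  induction e using Sym2.ind with
  | _ x y => exact Set.disjoint_left.mp hST (h₁.mem_of_adj he) (h₂.mem_of_adj he')

lemma IsHamCycleOn.exists_perfectMatchings (h : IsHamCycleOn H S) (hS : Even S.ncard) :
    ∃ M M' : SimpleGraph V, H = M ⊔ M' ∧ Disjoint M.edgeSet M'.edgeSet ∧
      ∀ v ∈ S, degS M v = 1 ∧ degS M' v = 1 := by
  obtain ⟨N, f, hN, hf, rfl, rfl⟩ := h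
  rw [Set.ncard_range_of_injective hf, Nat.card_zmod] at hS
  have h2 : 2 ∣ N := even_iff_two_dvd.mp hS
  refine ⟨_, _, cycOn_eq_cycOnParity_sup h2 hN hf, disjoint_edgeSet_cycOnParity h2 hN hf, ?_⟩
  rintro v ⟨j, rfl⟩
  exact ⟨degS_cycOnParity h2 hN hf 0 j, degS_cycOnParity h2 hN hf 1 j⟩

lemma degS_sup_of_forall_not_adj {G : SimpleGraph V} {v : V} (h : ∀ w, ¬ H.Adj v w) :
    degS (G ⊔ H) v = degS G v := by
  rw [degS, degS]
  congr 1
  ext w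
  simp [h]

lemma exists_perfectMatchings_of_isHamCycleOn (h₁ : IsHamCycleOn H₁ S) (h₂ : IsHamCycleOn H₂ T)
    (hST : Disjoint S T) (hcover : ∀ v, v ∈ S ∨ v ∈ T) (hS : Even S.ncard) (hT : Even T.ncard) :
    ∃ M₁ M₂ : SimpleGraph V, H₁ ⊔ H₂ = M₁ ⊔ M₂ ∧ Disjoint M₁.edgeSet M₂.edgeSet ∧
      (∀ v, degS M₁ v = 1) ∧ (∀ v, degS M₂ v = 1) := by
  obtain ⟨M, M', rfl, hMM', hdeg⟩ := h₁.exists_perfectMatchings hS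
  obtain ⟨P, P', rfl, hPP', hdeg'⟩ := h₂.exists_perfectMatchings hT
  have hdisj := h₁.disjoint_edgeSet h₂ hST
  have hM_off : ∀ {G}, G ≤ M ⊔ M' → ∀ v ∈ T, ∀ w, ¬ G.Adj v w := fun hG v hv w hw =>
    Set.disjoint_right.mp hST hv (h₁.mem_of_adj (hG hw))
  have hP_off : ∀ {G}, G ≤ P ⊔ P' → ∀ v ∈ S, ∀ w, ¬ G.Adj v w := fun hG v hv w hw =>
    Set.disjoint_left.mp hST hv (h₂.mem_of_adj (hG hw))
  refine ⟨M ⊔ P, M' ⊔ P', sup_sup_sup_comm _ _ _ _, ?_, ?_, ?_⟩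
  · rw [edgeSet_sup, edgeSet_sup, Set.disjoint_union_left, Set.disjoint_union_right,
      Set.disjoint_union_right]
    exact ⟨⟨hMM', hdisj.mono (edgeSet_mono le_sup_left) (edgeSet_mono le_sup_right)⟩,
      (hdisj.mono (edgeSet_mono le_sup_right) (edgeSet_mono le_sup_left)).symm, hPP'⟩
  · intro v
    rcases hcover v with hv | hv
    · rw [degS_sup_of_forall_not_adj (hP_off le_sup_left v hv)]
      exact (hdeg v hv).1
    · rw [sup_comm, degS_sup_of_forall_not_adj (hM_off le_sup_left v hv)]
      exact (hdeg' v hv).1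
  · intro v
    rcases hcover v with hv | hv
    · rw [degS_sup_of_forall_not_adj (hP_off le_sup_right v hv)]
      exact (hdeg v hv).2
    · rw [sup_comm, degS_sup_of_forall_not_adj (hM_off le_sup_right v hv)]
      exact (hdeg' v hv).2

end Assembly

lemma sdiff_sup_eq_replaceFictive_sup {V : Type*} {J C C' : SimpleGraph V} {X₀ X Y₀ Y : Set V}
    (hC : ∀ x y, C.Adj x y → x ∈ X) (hC' : ∀ x y, C'.Adj x y → x ∈ Y) (hXY : Disjoint X Y)
    (hJ : ∀ x y, J.Adj x y → (x ∈ X₀ ∪ X ∧ y ∈ X₀ ∪ X) ∨ (x ∈ Y₀ ∪ Y ∧ y ∈ Y₀ ∪ Y)) :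
    ((C ⊔ C') \ ((starAB J).inducedOn X ⊔ (starAB J).inducedOn Y)) ⊔ J =
      replaceFictive J X₀ X C ⊔ replaceFictive J Y₀ Y C' := by
  ext x y
  simp only [replaceFictive, sup_adj, sdiff_adj]
  constructor
  · rintro (⟨hxy | hxy, hfic⟩ | hxy)
    · exact Or.inl (Or.inl ⟨hxy, fun h => hfic (Or.inl h)⟩)
    · exact Or.inr (Or.inl ⟨hxy, fun h => hfic (Or.inr h)⟩)
    · rcases hJ x y hxy with hX | hY
      exacts [Or.inl (Or.inr ⟨hxy, hX⟩), Or.inr (Or.inr ⟨hxy, hY⟩)]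
  · rintro ((⟨hxy, hfic⟩ | ⟨hxy, -⟩) | (⟨hxy, hfic⟩ | ⟨hxy, -⟩))
    · refine Or.inl ⟨Or.inl hxy, fun h => h.elim hfic fun h => ?_⟩
      exact Set.disjoint_left.mp hXY (hC x y hxy) h.2.1
    · exact Or.inr hxy
    · refine Or.inl ⟨Or.inr hxy, fun h => h.elim (fun h => ?_) hfic⟩
      exact Set.disjoint_right.mp hXY (hC' x y hxy) h.2.1
    · exact Or.inr hxy

/-- Proposition 5.1(ii): if `J` is a matching exceptional system and `C_A`, `C_B` are Hamilton
cycles on `A`, `B` consistent with `J*_A`, `J*_B`, then `C_A + C_B - J* + J` is the union of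
a Hamilton cycle on `A' = A₀ ∪ A` and one on `B' = B₀ ∪ B`; in particular if `|A'|`, `|B'|`
are even, it is the union of two edge-disjoint perfect matchings on `V`. -/
theorem stmt8 (V : Type*) [Fintype V] (A A₀ B B₀ : Set V) (J : SimpleGraph V)
    (hpart : A ∪ A₀ ∪ B ∪ B₀ = Set.univ)
    (hd1 : Disjoint A A₀) (hd2 : Disjoint A B) (hd3 : Disjoint A B₀)
    (hd4 : Disjoint A₀ B) (hd5 : Disjoint A₀ B₀) (hd6 : Disjoint B B₀)
    (hps : PathSystem J)
    (hEC2a : ∀ v ∈ A₀ ∪ B₀, degS J v = 2)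
    (hEC2b : ∀ v, v ∉ A₀ ∪ B₀ → degS J v ≤ 1)
    (hEC3 : ∀ x y, J.Adj x y → ¬(x ∈ A ∧ y ∈ A) ∧ ¬(x ∈ B ∧ y ∈ B))
    -- (MES): `J` has no edges between `A' = A₀ ∪ A` and `B' = B₀ ∪ B`
    (hMES : ∀ x y, J.Adj x y →
      ¬((x ∈ A₀ ∪ A ∧ y ∈ B₀ ∪ B) ∨ (y ∈ A₀ ∪ A ∧ x ∈ B₀ ∪ B)))
    -- the fictive edge graphs `J*_A := J*_{AB}[A]` and `J*_B := J*_{AB}[B]`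
    (JA JB : SimpleGraph V)
    (hJA : JA = SimpleGraph.fromEdgeSet
      {e | ∃ u v, e = s(u, v) ∧ (starAB J).Adj u v ∧ u ∈ A ∧ v ∈ A})
    (hJB : JB = SimpleGraph.fromEdgeSet
      {e | ∃ u v, e = s(u, v) ∧ (starAB J).Adj u v ∧ u ∈ B ∧ v ∈ B})
    -- the Hamilton cycles `C_A`, `C_B`, consistent with `J*_A`, `J*_B`
    (NA NB : ℕ) (fA : ZMod NA → V) (fB : ZMod NB → V)
    (hNA : 3 ≤ NA) (hNB : 3 ≤ NB)
    (hfAinj : Function.Injective fA) (hfBinj : Function.Injective fB)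
    (hfA : Set.range fA = A) (hfB : Set.range fB = B)
    (hconsA : JA ≤ cycOn fA) (hconsB : JB ≤ cycOn fB) :
    (∃ H1 H2 : SimpleGraph V,
        ((cycOn fA ⊔ cycOn fB) \ (JA ⊔ JB)) ⊔ J = H1 ⊔ H2 ∧
        Disjoint H1.edgeSet H2.edgeSet ∧
        IsHamCycleOn H1 (A₀ ∪ A) ∧ IsHamCycleOn H2 (B₀ ∪ B)) ∧
    (Even (A₀ ∪ A).ncard → Even (B₀ ∪ B).ncard →
      ∃ M1 M2 : SimpleGraph V,
        ((cycOn fA ⊔ cycOn fB) \ (JA ⊔ JB)) ⊔ J = M1 ⊔ M2 ∧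
        Disjoint M1.edgeSet M2.edgeSet ∧
        (∀ v, degS M1 v = 1) ∧ (∀ v, degS M2 v = 1)) := by
  rw [fromEdgeSet_restrict_eq_inducedOn] at hJA hJB
  subst hJA hJB
  have hcover : ∀ v, v ∈ A₀ ∪ A ∨ v ∈ B₀ ∪ B := fun v => by
    have : v ∈ A ∪ A₀ ∪ B ∪ B₀ := hpart ▸ Set.mem_univ v
    simp only [Set.mem_union] at this ⊢
    tauto
  have hA'B' : Disjoint (A₀ ∪ A) (B₀ ∪ B) := by
    simp only [Set.disjoint_union_left, Set.disjoint_union_right]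
    exact ⟨⟨hd5, hd3⟩, hd4, hd2⟩
  have hJsides : ∀ x y, J.Adj x y →
      (x ∈ A₀ ∪ A ∧ y ∈ A₀ ∪ A) ∨ (x ∈ B₀ ∪ B ∧ y ∈ B₀ ∪ B) := fun x y h => by
    have := hMES x y h
    rcases hcover x with hx | hx <;> rcases hcover y with hy | hy <;> tauto
  have hHA : IsHamCycleOn (replaceFictive J A₀ A (cycOn fA)) (A₀ ∪ A) :=
    isHamCycleOn_replaceFictive hps hd1.symm (fun v hv => hEC2a v (Or.inl hv))
      (fun v hv => hEC2b v fun h => h.elim (Set.disjoint_left.mp hd1 hv)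
        (Set.disjoint_left.mp hd3 hv))
      (fun x y h hx hy => (hEC3 x y h).1 ⟨hx, hy⟩)
      (fun x y h hx => ((hJsides x y h).resolve_right fun h' =>
        Set.disjoint_left.mp hA'B' hx h'.1).2)
      hNA hfAinj hfA hconsA
  have hHB : IsHamCycleOn (replaceFictive J B₀ B (cycOn fB)) (B₀ ∪ B) :=
    isHamCycleOn_replaceFictive hps hd6.symm (fun v hv => hEC2a v (Or.inr hv))
      (fun v hv => hEC2b v fun h => h.elim (Set.disjoint_right.mp hd4 hv)
        (Set.disjoint_left.mp hd6 hv))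
      (fun x y h hx hy => (hEC3 x y h).2 ⟨hx, hy⟩)
      (fun x y h hx => ((hJsides x y h).resolve_left fun h' =>
        Set.disjoint_right.mp hA'B' hx h'.1).2)
      hNB hfBinj hfB hconsB
  rw [sdiff_sup_eq_replaceFictive_sup (fun x y h => hfA ▸ cycOn_adj_mem_range h)
    (fun x y h => hfB ▸ cycOn_adj_mem_range h) hd2 hJsides]
  exact ⟨⟨_, _, rfl, hHA.disjoint_edgeSet hHB hA'B', hHA, hHB⟩,
    exists_perfectMatchings_of_isHamCycleOn hHA hHB hA'B' hcover⟩
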